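/- arXiv:1611.01285 — 5 statements merged into one kernel-verified Lean document; each statement's English description precedes it below -/
import Mathlib

section
/- Let α, β ∈ ℝⁿ. Then α is majorized by β if and only if there exists an n×n doubly stochastic matrix P such that α = βP (i.e., α_j = Σ_{i=1}^n β_i P_{ij} for every j). -/
open Finset Matrix

/-- Sum of the `k` largest components of a vector in `ℝⁿ`:
the largest sum of `k` components. -/
noncomputable def topSum {n : ℕ} (a : Fin n → ℝ) (k : ℕ) : ℝ :=
  sSup {t : ℝ | ∃ s : Finset (Fin n), s.card = k ∧ t = ∑ i ∈ s, a i}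

/-- `Majorizes b a` means `β = b` majorizes `α = a`, i.e. `a ≤_m b`:
equal total sums, and for every `k = 1, …, n-1` the sum of the `k` largest
components of `a` is at most that of `b`. -/
def Majorizes {n : ℕ} (b a : Fin n → ℝ) : Prop :=
  (∑ i, a i = ∑ i, b i) ∧ ∀ k : ℕ, 1 ≤ k → k ≤ n - 1 → topSum a k ≤ topSum b k

/-- A doubly stochastic matrix: non-negative entries, all rows and all columns sum to 1. -/
def IsDoublyStochastic {n : ℕ} (P : Matrix (Fin n) (Fin n) ℝ) : Prop :=
  (∀ i j, 0 ≤ P i j) ∧ (∀ i, ∑ j, P i j = 1) ∧ (∀ j, ∑ i, P i j = 1)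

/-!
By Birkhoff's theorem the doubly stochastic matrices form the convex hull of the permutation
matrices, so the right-hand side says that `a` lies in the convex hull of the permutations of `b`.
Reading the sum of the `k` largest components as a maximum over `k`-subsets makes
`{a | Majorizes b a}` an intersection of a hyperplane with half-spaces, hence convex; it contains
every permutation of `b`, hence the whole hull. Conversely, if `a` lay outside the hull,
Hahn–Banach would give `c` with `c ⬝ a > c ⬝ (b ∘ σ)` for every `σ`; but after sorting `c`,
summation by parts bounds `c ⬝ a` by `c ⬝ (b ∘ σ)` for the `σ` that arranges `b` in the same
order as `c`.
-/

section topSum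

variable {n : ℕ}

lemma le_topSum (a : Fin n → ℝ) (s : Finset (Fin n)) : ∑ i ∈ s, a i ≤ topSum a #s := by
  refine le_csSup ?_ ⟨s, rfl, rfl⟩
  refine ((univ.powersetCard #s).image fun t => ∑ i ∈ t, a i).bddAbove.mono ?_
  rintro _ ⟨t, ht, rfl⟩
  simpa using ⟨t, ht, rfl⟩

lemma topSum_le {a : Fin n → ℝ} {k : ℕ} {r : ℝ} (hk : k ≤ n)
    (h : ∀ s : Finset (Fin n), #s = k → ∑ i ∈ s, a i ≤ r) : topSum a k ≤ r := by
  obtain ⟨s, -, hs⟩ :=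
    exists_subset_card_eq (s := (univ : Finset (Fin n))) (n := k) (by simpa using hk)
  exact csSup_le ⟨_, s, hs, rfl⟩ (by rintro _ ⟨s, hs, rfl⟩; exact h s hs)

theorem majorizes_iff_forall_sum_le {a b : Fin n → ℝ} :
    Majorizes b a ↔ ∑ i, a i = ∑ i, b i ∧ ∀ s : Finset (Fin n), ∑ i ∈ s, a i ≤ topSum b #s := by
  refine ⟨fun h => ⟨h.1, fun s => ?_⟩,
    fun h => ⟨h.1, fun k _ hk => topSum_le (by omega) fun s hs => hs ▸ h.2 s⟩⟩
  obtain hs | hs | hs : #s = 0 ∨ #s = n ∨ 1 ≤ #s ∧ #s ≤ n - 1 := by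
    have := card_le_univ s
    simp only [Fintype.card_fin] at this
    omega
  · simpa [card_eq_zero.1 hs] using le_topSum b ∅
  · simpa [eq_univ_of_card s (by simpa using hs), h.1] using le_topSum b univ
  · exact (le_topSum a s).trans (h.2 _ hs.1 hs.2)

theorem convex_setOf_majorizes (b : Fin n → ℝ) : Convex ℝ {a | Majorizes b a} := by
  have hlin (s : Finset (Fin n)) : IsLinearMap ℝ fun a : Fin n → ℝ => ∑ i ∈ s, a i :=
    ⟨fun a a' => sum_add_distrib, fun c a => (mul_sum s a c).symm⟩
  simp only [majorizes_iff_forall_sum_le, Set.ofPred_and, Set.ofPred_forall]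
  exact (convex_hyperplane (hlin univ) _).inter
    (convex_iInter fun s => convex_halfSpace_le (hlin s) _)

theorem majorizes_comp_perm (b : Fin n → ℝ) (σ : Equiv.Perm (Fin n)) : Majorizes b (b ∘ σ) := by
  refine majorizes_iff_forall_sum_le.2 ⟨Equiv.sum_comp σ b, fun s => ?_⟩
  simpa [sum_map] using le_topSum b (s.map σ.toEmbedding)

end topSum

theorem Finset.sum_le_sum_of_isUpperSet {ι M : Type*} [LinearOrder ι] [AddCommMonoid M]
    [LinearOrder M] [IsOrderedCancelAddMonoid M] {w : ι → M} (hw : Monotone w)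
    {s t : Finset ι} (ht : IsUpperSet (t : Set ι)) (hst : #s = #t) :
    ∑ i ∈ s, w i ≤ ∑ i ∈ t, w i := by
  classical
  rw [← sum_sdiff_le_sum_sdiff]
  obtain hts | hts := (t \ s).eq_empty_or_nonempty
  · rw [hts, card_eq_zero.1 ((card_sdiff_comm hst).trans (card_eq_zero.2 hts))]
  have hbelow : ∀ x ∈ s \ t, ∀ y ∈ t \ s, w x ≤ w y := fun x hx y hy =>
    hw (le_of_not_ge fun hyx => (mem_sdiff.1 hx).2 (ht hyx (mem_sdiff.1 hy).1))
  calc ∑ i ∈ s \ t, w i ≤ #(s \ t) • (t \ s).inf' hts w :=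
        sum_le_card_nsmul _ _ _ fun x hx => le_inf' _ _ fun y hy => hbelow x hx y hy
    _ = #(t \ s) • (t \ s).inf' hts w := by rw [card_sdiff_comm hst]
    _ ≤ ∑ i ∈ t \ s, w i := card_nsmul_le_sum _ _ _ fun y hy => inf'_le _ hy

theorem topSum_le_sum_Ici {n : ℕ} {b : Fin n → ℝ} {τ : Equiv.Perm (Fin n)}
    (hτ : Monotone (b ∘ τ)) (m : Fin n) : topSum b (n - m) ≤ ∑ i ∈ Ici m, b (τ i) := by
  refine topSum_le (Nat.sub_le _ _) fun s hs => ?_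
  calc ∑ i ∈ s, b i = ∑ i ∈ s.map τ.symm.toEmbedding, b (τ i) := by simp [sum_map]
    _ ≤ _ := sum_le_sum_of_isUpperSet hτ (by simpa using isUpperSet_Ici m) (by simp [hs])

namespace Fin

variable {R : Type*} [CommRing R] [LinearOrder R] [IsStrictOrderedRing R]

-- Summation by parts, one index at a time: `u 0` multiplies the full sum of `d`.
theorem sum_mul_nonneg_of_monotone_of_nonneg {n : ℕ} {u d : Fin n → R} (hu : Monotone u)
    (hu0 : 0 ≤ u) (hd : ∀ m, 0 ≤ ∑ i ∈ Ici m, d i) : 0 ≤ ∑ i, u i * d i := by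
  induction n with
  | zero => simp
  | succ n ih =>
    have hsplit : ∑ i, u i * d i = u 0 * ∑ i, d i + ∑ i : Fin n, (u i.succ - u 0) * d i.succ := by
      simp only [Fin.sum_univ_succ, sub_mul, sum_sub_distrib, mul_add, mul_sum]
      ring
    rw [hsplit]
    refine add_nonneg (mul_nonneg (hu0 0) (by simpa using hd 0)) (ih ?_ ?_ ?_)
    · exact fun i j hij => sub_le_sub_right (hu (Fin.succ_le_succ_iff.2 hij)) _
    · exact fun i => sub_nonneg.2 (hu (Fin.zero_le _))
    · exact fun m => by simpa [Fin.sum_Ici_succ] using hd m.succ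

theorem sum_mul_nonneg_of_monotone {n : ℕ} {u d : Fin n → R} (hu : Monotone u)
    (hd : ∀ m, 0 ≤ ∑ i ∈ Ici m, d i) (hd0 : ∑ i, d i = 0) : 0 ≤ ∑ i, u i * d i := by
  rcases n with _ | n
  · simp
  have := sum_mul_nonneg_of_monotone_of_nonneg (u := fun i => u i - u 0)
    (fun i j h => sub_le_sub_right (hu h) _) (fun i => sub_nonneg.2 (hu (Fin.zero_le i))) hd
  simpa [sub_mul, sum_sub_distrib, ← mul_sum, hd0] using this

end Fin

theorem Majorizes.exists_perm_sum_mul_le {n : ℕ} {a b : Fin n → ℝ} (h : Majorizes b a)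
    (c : Fin n → ℝ) : ∃ σ : Equiv.Perm (Fin n), ∑ j, c j * a j ≤ ∑ j, c j * b (σ j) := by
  obtain ⟨hsum, hle⟩ := majorizes_iff_forall_sum_le.1 h
  set π := Tuple.sort c
  set τ := Tuple.sort b
  -- After reindexing along `π`, which sorts `c`, the suffix sums of `a` are bounded by the top
  -- sums of `a`, hence of `b`, and those are the suffix sums of `b` sorted by `τ`.
  refine ⟨τ * π⁻¹, ?_⟩
  rw [← Equiv.sum_comp π, ← Equiv.sum_comp π fun j => c j * b ((τ * π⁻¹) j), ← sub_nonneg,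
    ← sum_sub_distrib]
  simp only [Equiv.Perm.mul_apply, Equiv.Perm.inv_def, Equiv.symm_apply_apply, ← mul_sub]
  refine Fin.sum_mul_nonneg_of_monotone (Tuple.monotone_sort c) (fun m => ?_) ?_
  · rw [sum_sub_distrib, sub_nonneg]
    calc ∑ i ∈ Ici m, a (π i) = ∑ i ∈ (Ici m).map π.toEmbedding, a i := by simp [sum_map]
      _ ≤ topSum b (n - m) := by simpa using hle ((Ici m).map π.toEmbedding)
      _ ≤ _ := topSum_le_sum_Ici (Tuple.monotone_sort b) m
  · rw [sum_sub_distrib, Equiv.sum_comp τ b, Equiv.sum_comp π a, hsum, sub_self]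

theorem Majorizes.mem_convexHull_perm {n : ℕ} {a b : Fin n → ℝ} (h : Majorizes b a) :
    a ∈ convexHull ℝ (Set.range fun σ : Equiv.Perm (Fin n) => b ∘ σ) := by
  by_contra ha
  obtain ⟨f, r, hf, hfa⟩ := geometric_hahn_banach_closed_point (convex_convexHull ℝ _)
    ((Set.finite_range _).isClosed_convexHull ℝ) ha
  set c : Fin n → ℝ := fun j => f fun k => if j = k then 1 else 0
  have hfc (x : Fin n → ℝ) : f x = ∑ j, c j * x j := by
    simpa [c, mul_comm] using f.toLinearMap.pi_apply_eq_sum_univ x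
  obtain ⟨σ, hσ⟩ := h.exists_perm_sum_mul_le c
  have := hf _ (subset_convexHull ℝ _ ⟨σ, rfl⟩)
  rw [hfc] at this hfa
  exact absurd (hσ.trans this.le) (not_le.2 hfa)

theorem majorizes_iff_mem_convexHull_perm {n : ℕ} {a b : Fin n → ℝ} :
    Majorizes b a ↔ a ∈ convexHull ℝ (Set.range fun σ : Equiv.Perm (Fin n) => b ∘ σ) :=
  ⟨Majorizes.mem_convexHull_perm,
    fun ha => convexHull_min (Set.range_subset_iff.2 (majorizes_comp_perm b))
      (convex_setOf_majorizes b) ha⟩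

theorem exists_doublyStochastic_eq_vecMul_iff {n : ℕ} {a b : Fin n → ℝ} :
    (∃ P : Matrix (Fin n) (Fin n) ℝ, IsDoublyStochastic P ∧ a = b ᵥ* P) ↔
      a ∈ convexHull ℝ (Set.range fun σ : Equiv.Perm (Fin n) => b ∘ σ) := by
  have hlin : IsLinearMap ℝ fun P : Matrix (Fin n) (Fin n) ℝ => b ᵥ* P :=
    ⟨fun P Q => vecMul_add P Q b, fun c P => vecMul_smul b c P⟩
  have himage : (b ᵥ* ·) '' {σ.permMatrix ℝ | σ : Equiv.Perm (Fin n)} =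
      Set.range fun σ : Equiv.Perm (Fin n) => b ∘ σ := by
    ext x
    simp only [Set.mem_image, Set.mem_ofPred_eq, exists_exists_eq_and, vecMul_permMatrix,
      Set.mem_range]
    exact (Equiv.symm_bijective.surjective.exists
      (p := fun σ : Equiv.Perm (Fin n) => b ∘ σ = x)).symm
  rw [← himage, ← hlin.image_convexHull, ← doublyStochastic_eq_convexHull_permMatrix]
  simp [IsDoublyStochastic, mem_doublyStochastic_iff_sum, eq_comm]

/-- Hardy–Littlewood–Pólya: `a` is majorized by `b` iff `a = b P` for some
doubly stochastic matrix `P`. -/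
theorem majorizes_iff_exists_doublyStochastic {n : ℕ} (a b : Fin n → ℝ) :
    Majorizes b a ↔
      ∃ P : Matrix (Fin n) (Fin n) ℝ, IsDoublyStochastic P ∧ a = b ᵥ* P := by
  rw [majorizes_iff_mem_convexHull_perm, exists_doublyStochastic_eq_vecMul_iff]
end

section
/- Let ≿ be a preference relation on X that is permutation invariant and convex. Then for every α ∈ 𝕊ⁿ, every T-transform T, and all x₁, …, x_n ∈ X, (αT) · x ≿ α · x, where α · x = Σ_{i=1}^n α_i x_i. -/
open Finset Matrix

/-- A permutation matrix. -/
def IsPermMatrix {n : ℕ} (P : Matrix (Fin n) (Fin n) ℝ) : Prop :=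
  ∃ σ : Equiv.Perm (Fin n), ∀ i j, P i j = if σ i = j then 1 else 0

/-- A T-transform: `T = λ I + (1-λ) Π` with `λ ∈ [0,1]` and `Π` a permutation
matrix interchanging exactly two coordinates. -/
def IsTTransform {n : ℕ} (T : Matrix (Fin n) (Fin n) ℝ) : Prop :=
  ∃ (l : ℝ) (j k : Fin n), 0 ≤ l ∧ l ≤ 1 ∧ j ≠ k ∧
    T = l • (1 : Matrix (Fin n) (Fin n) ℝ) +
        (1 - l) • Matrix.of (fun i i' => if Equiv.swap j k i = i' then (1 : ℝ) else 0)

/-- A convex preference relation: `x ≿ y` implies `t x + (1-t) y ≿ y` for `t ∈ (0,1)`. -/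
def ConvexPref {X : Type*} [AddCommGroup X] [Module ℝ X] (pref : X → X → Prop) : Prop :=
  ∀ x y : X, pref x y → ∀ t : ℝ, 0 < t → t < 1 → pref (t • x + (1 - t) • y) y

/-- A permutation invariant preference relation: `∑ αᵢ xᵢ ∼ ∑ (αΠ)ᵢ xᵢ` for every
`α ∈ 𝕊ⁿ` and permutation matrix `Π`. -/
def PermInvariant {X : Type*} [AddCommGroup X] [Module ℝ X] (pref : X → X → Prop) : Prop :=
  ∀ (n : ℕ) (a : Fin n → ℝ), a ∈ stdSimplex ℝ (Fin n) →
    ∀ P : Matrix (Fin n) (Fin n) ℝ, IsPermMatrix P → ∀ x : Fin n → X,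
      pref (∑ i, a i • x i) (∑ i, (a ᵥ* P) i • x i) ∧
        pref (∑ i, (a ᵥ* P) i • x i) (∑ i, a i • x i)

/-- For a permutation invariant and convex preference relation, applying a
T-transform to the weights is weakly preferred: `(αT)·x ≿ α·x`. -/
theorem tTransform_preferred {X : Type*} [AddCommGroup X] [Module ℝ X]
    (pref : X → X → Prop)
    (hcomplete : ∀ x y : X, pref x y ∨ pref y x)
    (htrans : ∀ x y z : X, pref x y → pref y z → pref x z)
    (hPI : PermInvariant pref) (hConv : ConvexPref pref)
    {n : ℕ} (a : Fin n → ℝ) (ha : a ∈ stdSimplex ℝ (Fin n))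
    (T : Matrix (Fin n) (Fin n) ℝ) (hT : IsTTransform T) (x : Fin n → X) :
    pref (∑ i, (a ᵥ* T) i • x i) (∑ i, a i • x i) := by
  obtain ⟨l, j, k, hl0, hl1, hjk, hTdef⟩ := hT
  set P : Matrix (Fin n) (Fin n) ℝ :=
    Matrix.of (fun i i' => if Equiv.swap j k i = i' then (1 : ℝ) else 0) with hPdef
  have hP : IsPermMatrix P := ⟨Equiv.swap j k, fun i j => rfl⟩
  obtain ⟨h1, h2⟩ := hPI n a ha P hP x
  set y := ∑ i, a i • x i with hy
  set z := ∑ i, (a ᵥ* P) i • x i with hz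
  have hs : ∀ (c : ℝ) (M : Matrix (Fin n) (Fin n) ℝ) (i : Fin n),
      (a ᵥ* (c • M)) i = c * (a ᵥ* M) i := by
    intro c M i
    simp [Matrix.vecMul, dotProduct, Finset.mul_sum, mul_left_comm]
  have hsum : ∑ i, (a ᵥ* T) i • x i = l • y + (1 - l) • z := by
    rw [hTdef, hy, hz]
    simp only [Matrix.vecMul_add, Pi.add_apply, hs, Matrix.vecMul_one, add_smul,
      mul_smul, Finset.sum_add_distrib, Finset.smul_sum]
  rw [hsum]
  have hself : pref y y := by rcases hcomplete y y with h | h <;> exact h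
  rcases eq_or_lt_of_le hl0 with rfl | hl0'
  · simpa using h2
  rcases eq_or_lt_of_le hl1 with rfl | hl1'
  · simpa using hself
  · exact htrans _ _ _ (hConv y z h1 l hl0' hl1') h2
end

section
/- A preference relation ≿ on X that is permutation invariant and convex exhibits preference for weak naive diversification: for every n, every α ∈ 𝕊ⁿ, and all x₁, …, x_n ∈ X, (1/n) Σ_{i=1}^n x_i ≿ Σ_{i=1}^n α_i x_i. -/
open Finset Matrix

/-- Two-point convex combination lemma. -/
lemma pref_segment {X : Type*} [AddCommGroup X] [Module ℝ X] (pref : X → X → Prop)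
    (hcomplete : ∀ x y : X, pref x y ∨ pref y x)
    (htrans : ∀ x y z : X, pref x y → pref y z → pref x z)
    (hConv : ConvexPref pref) {x y z : X} (hx : pref x z) (hy : pref y z)
    {t : ℝ} (ht0 : 0 ≤ t) (ht1 : t ≤ 1) : pref (t • x + (1 - t) • y) z := by
  rcases eq_or_lt_of_le ht0 with h0 | h0
  · simp [← h0]; simpa using hy
  rcases eq_or_lt_of_le ht1 with h1 | h1
  · simp [h1]; simpa using hx
  rcases hcomplete x y with h | h
  · exact htrans _ _ _ (hConv x y h t h0 h1) hy
  · have := hConv y x h (1 - t) (by linarith) (by linarith)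
    rw [sub_sub_cancel] at this
    rw [add_comm]
    exact htrans _ _ _ this hx

/-- Finite convex combinations of alternatives weakly preferred to `z` are
weakly preferred to `z`. -/
lemma pref_convexCombo {X : Type*} [AddCommGroup X] [Module ℝ X] (pref : X → X → Prop)
    (hcomplete : ∀ x y : X, pref x y ∨ pref y x)
    (htrans : ∀ x y z : X, pref x y → pref y z → pref x z)
    (hConv : ConvexPref pref) {ι : Type*} (s : Finset ι) :
    ∀ (w : ι → ℝ) (y : ι → X) (z : X), (∀ i ∈ s, 0 ≤ w i) → (∑ i ∈ s, w i) = 1 →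
      (∀ i ∈ s, pref (y i) z) → pref (∑ i ∈ s, w i • y i) z := by
  induction s using Finset.cons_induction with
  | empty => intro w y z _ hsum _; simp at hsum
  | cons i s his ih =>
    intro w y z hw hsum hy
    rw [Finset.sum_cons] at hsum ⊢
    have hwi : 0 ≤ w i := hw i (Finset.mem_cons_self _ _)
    have hws : ∀ j ∈ s, 0 ≤ w j := fun j hj => hw j (Finset.mem_cons_of_mem hj)
    have hsle : 0 ≤ ∑ j ∈ s, w j := Finset.sum_nonneg hws
    rcases eq_or_lt_of_le hwi with h0 | h0
    · -- w i = 0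
      have hs1 : (∑ j ∈ s, w j) = 1 := by linarith
      have := ih w y z hws hs1 (fun j hj => hy j (Finset.mem_cons_of_mem hj))
      simpa [← h0] using this
    have hwi1 : w i ≤ 1 := by linarith
    rcases eq_or_lt_of_le hwi1 with h1 | h1
    · -- w i = 1, rest are zero
      have hs0 : (∑ j ∈ s, w j) = 0 := by linarith
      have hz : ∀ j ∈ s, w j = 0 :=
        (Finset.sum_eq_zero_iff_of_nonneg hws).mp hs0
      have : (∑ j ∈ s, w j • y j) = 0 :=
        Finset.sum_eq_zero fun j hj => by rw [hz j hj, zero_smul]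
      rw [this, add_zero, h1, one_smul]
      exact hy i (Finset.mem_cons_self _ _)
    · -- 0 < w i < 1
      set t := w i with ht
      have hr : (0:ℝ) < 1 - t := by linarith
      have hs1 : (∑ j ∈ s, w j) = 1 - t := by linarith
      have hsum' : (∑ j ∈ s, w j / (1 - t)) = 1 := by
        rw [← Finset.sum_div, hs1, div_self (ne_of_gt hr)]
      have hpref' := ih (fun j => w j / (1 - t)) y z
        (fun j hj => div_nonneg (hws j hj) hr.le) hsum'
        (fun j hj => hy j (Finset.mem_cons_of_mem hj))
      have heq : (∑ j ∈ s, w j • y j) = (1 - t) • ∑ j ∈ s, (w j / (1 - t)) • y j := by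
        rw [Finset.smul_sum]
        refine Finset.sum_congr rfl fun j hj => ?_
        rw [smul_smul, mul_div_cancel₀ _ (ne_of_gt hr)]
      rw [heq]
      exact pref_segment pref hcomplete htrans hConv
        (hy i (Finset.mem_cons_self _ _)) hpref' h0.le h1.le

/-- A permutation invariant and convex preference relation exhibits preference
for weak naive diversification: `(1/n) ∑ xᵢ ≿ ∑ αᵢ xᵢ`. -/
theorem permInvariant_convex_weakNaiveDiv {X : Type*} [AddCommGroup X] [Module ℝ X]
    (pref : X → X → Prop)
    (hcomplete : ∀ x y : X, pref x y ∨ pref y x)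
    (htrans : ∀ x y z : X, pref x y → pref y z → pref x z)
    (hPI : PermInvariant pref) (hConv : ConvexPref pref) :
    ∀ (n : ℕ) (a : Fin n → ℝ), a ∈ stdSimplex ℝ (Fin n) → ∀ x : Fin n → X,
      pref ((n : ℝ)⁻¹ • ∑ i, x i) (∑ i, a i • x i) := by
  intro n a ha x
  obtain ⟨hnn, hsum1⟩ := ha
  have hn : n ≠ 0 := by
    rintro rfl
    simp at hsum1
  have hnR : (0:ℝ) < n := by positivity
  have hfac : (0:ℝ) < (n.factorial : ℝ) := by positivity
  set z := ∑ i, a i • x i with hz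
  set y : Equiv.Perm (Fin n) → X := fun σ => ∑ j, a (σ⁻¹ j) • x j with hy
  -- each permuted portfolio is indifferent to z
  have hyz : ∀ σ : Equiv.Perm (Fin n), pref (y σ) z := by
    intro σ
    set P : Matrix (Fin n) (Fin n) ℝ := fun i j => if σ i = j then 1 else 0 with hP
    have hperm : IsPermMatrix P := ⟨σ, fun _ _ => rfl⟩
    have hv : ∀ j, (a ᵥ* P) j = a (σ⁻¹ j) := by
      intro j
      simp only [Matrix.vecMul, dotProduct, hP, Equiv.apply_eq_iff_eq_symm_apply,
        mul_ite, mul_one, mul_zero, Finset.sum_ite_eq', Finset.mem_univ, if_true]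
      rfl
    have := (hPI n a ⟨hnn, hsum1⟩ P hperm x).2
    have heq : (∑ i, (a ᵥ* P) i • x i) = y σ := by
      refine Finset.sum_congr rfl fun j _ => by rw [hv j]
    rwa [heq] at this
  -- the uniform average over all permutations is preferred to z
  have hcard : (Fintype.card (Equiv.Perm (Fin n)) : ℝ) = (n.factorial : ℝ) := by
    rw [Fintype.card_perm, Fintype.card_fin]
  have hwsum : (∑ _σ : Equiv.Perm (Fin n), ((n.factorial : ℝ))⁻¹) = 1 := by
    rw [Finset.sum_const, Finset.card_univ, nsmul_eq_mul, ← hcard]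
    rw [hcard, mul_inv_cancel₀ (ne_of_gt hfac)]
  have hmain : pref (∑ σ : Equiv.Perm (Fin n), ((n.factorial : ℝ))⁻¹ • y σ) z :=
    pref_convexCombo pref hcomplete htrans hConv Finset.univ _ y z
      (fun _ _ => by positivity) hwsum (fun σ _ => hyz σ)
  -- identify the average with (1/n) ∑ xᵢ
  have key : (∑ σ : Equiv.Perm (Fin n), ((n.factorial : ℝ))⁻¹ • y σ)
      = (n : ℝ)⁻¹ • ∑ i, x i := by
    -- c j := ∑ σ, a (σ j)
    have hinv : ∀ j, (∑ σ : Equiv.Perm (Fin n), a (σ⁻¹ j))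
        = ∑ σ : Equiv.Perm (Fin n), a (σ j) := by
      intro j
      exact Fintype.sum_equiv (Equiv.inv (Equiv.Perm (Fin n))) _ _ (fun σ => rfl)
    have hconst : ∀ j j' : Fin n, (∑ σ : Equiv.Perm (Fin n), a (σ j))
        = ∑ σ : Equiv.Perm (Fin n), a (σ j') := by
      intro j j'
      refine Fintype.sum_equiv (Equiv.mulRight (Equiv.swap j j')) _ _ (fun σ => ?_)
      simp [Equiv.Perm.mul_apply, Equiv.swap_apply_left]
    have htot : (∑ j, ∑ σ : Equiv.Perm (Fin n), a (σ j)) = (n.factorial : ℝ) := by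
      calc (∑ j, ∑ σ : Equiv.Perm (Fin n), a (σ j))
          = ∑ σ : Equiv.Perm (Fin n), ∑ j, a (σ j) := Finset.sum_comm
        _ = ∑ _σ : Equiv.Perm (Fin n), (1:ℝ) :=
            Finset.sum_congr rfl fun σ _ => by rw [Equiv.sum_comp σ a, hsum1]
        _ = (n.factorial : ℝ) := by
            rw [Finset.sum_const, Finset.card_univ, nsmul_eq_mul, mul_one, hcard]
    obtain ⟨j0⟩ : Nonempty (Fin n) := ⟨⟨0, Nat.pos_of_ne_zero hn⟩⟩
    have hc : ∀ j, (∑ σ : Equiv.Perm (Fin n), a (σ j)) = (n.factorial : ℝ) / n := by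
      intro j
      have h1 : (∑ j', ∑ σ : Equiv.Perm (Fin n), a (σ j'))
          = (n : ℝ) * ∑ σ : Equiv.Perm (Fin n), a (σ j) := by
        rw [Finset.sum_congr rfl (fun j' _ => hconst j' j)]
        rw [Finset.sum_const, Finset.card_univ, Fintype.card_fin, nsmul_eq_mul]
      rw [h1] at htot
      field_simp
      linarith [htot]
    calc (∑ σ : Equiv.Perm (Fin n), ((n.factorial : ℝ))⁻¹ • y σ)
        = ∑ j, (((n.factorial : ℝ))⁻¹ * ∑ σ : Equiv.Perm (Fin n), a (σ⁻¹ j)) • x j := by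
          rw [show (∑ σ : Equiv.Perm (Fin n), ((n.factorial : ℝ))⁻¹ • y σ)
              = ∑ σ : Equiv.Perm (Fin n), ∑ j, (((n.factorial : ℝ))⁻¹ * a (σ⁻¹ j)) • x j from
            Finset.sum_congr rfl fun σ _ => by simp only [hy, Finset.smul_sum, smul_smul]]
          rw [Finset.sum_comm]
          refine Finset.sum_congr rfl fun j _ => ?_
          rw [Finset.mul_sum, Finset.sum_smul]
      _ = ∑ j, ((n : ℝ))⁻¹ • x j := by
          refine Finset.sum_congr rfl fun j _ => ?_
          rw [hinv j, hc j]
          congr 1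
          field_simp
      _ = (n : ℝ)⁻¹ • ∑ i, x i := by rw [Finset.smul_sum]
  rwa [key] at hmain
end

section
/- Let λ ∈ 𝕊ⁿ with λ ≠ u_n, where u_n = (1/n, …, 1/n), and let P be an n×n doubly stochastic matrix with λP = u_n. Then for every n×n permutation matrix Q, the Frobenius norm satisfies ‖P − Q‖_F ≥ 1. In particular ‖P − I_n‖_F ≥ 1, so the practical turnover τ̃_P(λ) = τ(λ)·‖P − I_n‖ (with the norm taken up to permutation, i.e., minimized over permutation matrices Q in ‖P − Q‖_F) is at least the theoretical turnover τ(λ) = (1/2) Σ_{i=1}^n |λ_i − 1/n|. -/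
open Finset Matrix

/-- The Frobenius norm `‖A‖_F = (∑_{i,j} |a_{ij}|²)^{1/2}`. -/
noncomputable def frobNorm {n : ℕ} (A : Matrix (Fin n) (Fin n) ℝ) : ℝ :=
  Real.sqrt (∑ i, ∑ j, |A i j| ^ 2)

/-- The theoretical turnover of rebalancing `λ` to equality:
`τ(λ) = (1/2) ∑ |λᵢ − 1/n|`. -/
noncomputable def turnover {n : ℕ} (l : Fin n → ℝ) : ℝ :=
  (1 / 2) * ∑ i, |l i - (n : ℝ)⁻¹|

/-!
Write `v = λ - u_n`, a nonzero vector. Since `P` has unit column sums, `vP = λP - u_n = 0`, so for a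
permutation matrix `Q` the vector `v(P - Q) = -vQ` is a permutation of `-v` and has the same length
as `v`. By Cauchy–Schwarz column by column, `‖vA‖ ≤ ‖v‖ ‖A‖_F` for every matrix `A`; with
`A = P - Q` this forces `‖P - Q‖_F ≥ 1`.
-/

section VecMul

variable {m k : Type*} [Fintype m] [Fintype k]

theorem Matrix.sum_sq_vecMul_le (v : m → ℝ) (A : Matrix m k ℝ) :
    ∑ j, (v ᵥ* A) j ^ 2 ≤ (∑ i, v i ^ 2) * ∑ i, ∑ j, A i j ^ 2 := by
  rw [Finset.sum_comm (f := fun i j => A i j ^ 2), Finset.mul_sum]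
  exact Finset.sum_le_sum fun j _ => Finset.sum_mul_sq_le_sq_mul_sq _ _ _

theorem Matrix.one_le_sum_sq_of_sum_sq_le_vecMul {v : m → ℝ} (hv : v ≠ 0) {A : Matrix m k ℝ}
    (h : ∑ i, v i ^ 2 ≤ ∑ j, (v ᵥ* A) j ^ 2) : 1 ≤ ∑ i, ∑ j, A i j ^ 2 := by
  obtain ⟨i, hi⟩ := Function.ne_iff.mp hv
  have hpos : 0 < ∑ i, v i ^ 2 :=
    Finset.sum_pos' (fun _ _ => sq_nonneg _) ⟨i, Finset.mem_univ _, sq_pos_of_ne_zero hi⟩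
  exact (le_mul_iff_one_le_right hpos).mp (h.trans (sum_sq_vecMul_le v A))

end VecMul

theorem one_le_frobNorm_iff {n : ℕ} (A : Matrix (Fin n) (Fin n) ℝ) :
    1 ≤ frobNorm A ↔ 1 ≤ ∑ i, ∑ j, A i j ^ 2 := by
  simp only [frobNorm, Real.one_le_sqrt, sq_abs]

theorem IsPermMatrix.exists_eq_permMatrix {n : ℕ} {Q : Matrix (Fin n) (Fin n) ℝ}
    (hQ : IsPermMatrix Q) : ∃ σ : Equiv.Perm (Fin n), Q = σ.permMatrix ℝ := by
  obtain ⟨σ, hσ⟩ := hQ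
  exact ⟨σ, Matrix.ext fun i j => by simp [hσ, PEquiv.toMatrix_apply]⟩

theorem isPermMatrix_one {n : ℕ} : IsPermMatrix (1 : Matrix (Fin n) (Fin n) ℝ) :=
  ⟨1, fun i j => by simp only [one_apply, Equiv.Perm.one_apply]; congr⟩

theorem IsDoublyStochastic.vecMul_const {n : ℕ} {P : Matrix (Fin n) (Fin n) ℝ}
    (hP : IsDoublyStochastic P) (c : ℝ) : (fun _ => c) ᵥ* P = fun _ => c := by
  ext j
  simp [vecMul, dotProduct, ← Finset.mul_sum, hP.2.2 j]

theorem one_le_frobNorm_sub_permMatrix {n : ℕ} {v : Fin n → ℝ} (hv : v ≠ 0)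
    {P : Matrix (Fin n) (Fin n) ℝ} (hvP : v ᵥ* P = 0) (σ : Equiv.Perm (Fin n)) :
    1 ≤ frobNorm (P - σ.permMatrix ℝ) := by
  have hvA : v ᵥ* (P - σ.permMatrix ℝ) = -(v ∘ σ.symm) := by
    rw [vecMul_sub, hvP, vecMul_permMatrix, zero_sub]
  rw [one_le_frobNorm_iff]
  refine one_le_sum_sq_of_sum_sq_le_vecMul hv (le_of_eq ?_)
  simp only [hvA, Pi.neg_apply, Function.comp_apply, neg_sq]
  exact (Equiv.sum_comp σ.symm (fun i => v i ^ 2)).symm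

theorem practical_turnover_ge_general {n : ℕ} (l : Fin n → ℝ)
    (hne : l ≠ fun _ => (n : ℝ)⁻¹)
    (P : Matrix (Fin n) (Fin n) ℝ) (hP : IsDoublyStochastic P)
    (hPu : l ᵥ* P = fun _ => (n : ℝ)⁻¹) :
    (∀ Q : Matrix (Fin n) (Fin n) ℝ, IsPermMatrix Q → 1 ≤ frobNorm (P - Q)) ∧
    1 ≤ frobNorm (P - 1) ∧
    turnover l ≤
      turnover l *
        sInf {t : ℝ | ∃ Q : Matrix (Fin n) (Fin n) ℝ, IsPermMatrix Q ∧
          t = frobNorm (P - Q)} := by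
  have hv : l - (fun _ => (n : ℝ)⁻¹) ≠ 0 := sub_ne_zero.mpr hne
  have hvP : (l - fun _ => (n : ℝ)⁻¹) ᵥ* P = 0 := by
    rw [sub_vecMul, hPu, hP.vecMul_const, sub_self]
  have key : ∀ Q : Matrix (Fin n) (Fin n) ℝ, IsPermMatrix Q → 1 ≤ frobNorm (P - Q) := by
    intro Q hQ
    obtain ⟨σ, rfl⟩ := hQ.exists_eq_permMatrix
    exact one_le_frobNorm_sub_permMatrix hv hvP σ
  refine ⟨key, key 1 isPermMatrix_one, ?_⟩
  have hτ : 0 ≤ turnover l := by unfold turnover; positivity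
  refine le_mul_of_one_le_right hτ (le_csInf ⟨_, 1, isPermMatrix_one, rfl⟩ ?_)
  rintro t ⟨Q, hQ, rfl⟩
  exact key Q hQ

/-- If `λ ∈ 𝕊ⁿ`, `λ ≠ u_n`, and `P` is doubly stochastic with `λP = u_n`, then
`‖P − Q‖_F ≥ 1` for every permutation matrix `Q` (in particular for `Q = I_n`),
so the practical turnover `τ(λ) · min_Q ‖P − Q‖_F` is at least the theoretical
turnover `τ(λ)`. -/
theorem practical_turnover_ge {n : ℕ} (l : Fin n → ℝ)
    (hl : l ∈ stdSimplex ℝ (Fin n)) (hne : l ≠ fun _ => (n : ℝ)⁻¹)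
    (P : Matrix (Fin n) (Fin n) ℝ) (hP : IsDoublyStochastic P)
    (hPu : l ᵥ* P = fun _ => (n : ℝ)⁻¹) :
    (∀ Q : Matrix (Fin n) (Fin n) ℝ, IsPermMatrix Q → 1 ≤ frobNorm (P - Q)) ∧
    1 ≤ frobNorm (P - 1) ∧
    turnover l ≤
      turnover l *
        sInf {t : ℝ | ∃ Q : Matrix (Fin n) (Fin n) ℝ, IsPermMatrix Q ∧
          t = frobNorm (P - Q)} :=
  practical_turnover_ge_general l hne P hP hPu
end

section
/- Let λ ∈ 𝕊ⁿ with λ ≠ u_n, where u_n = (1/n, …, 1/n), and suppose T is a T-transform with λT = u_n. Then ‖T − I_n‖_F = 1, where ‖·‖_F denotes the Frobenius norm and I_n the n×n identity matrix. -/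
open Finset Matrix

lemma frob_aux {n : ℕ} (j k : Fin n) (hjk : j ≠ k) :
    frobNorm ((1/2 : ℝ) • (1 : Matrix (Fin n) (Fin n) ℝ) +
      (1 - 1/2 : ℝ) • Matrix.of (fun i i' => if Equiv.swap j k i = i' then (1 : ℝ) else 0)
      - 1) = 1 := by
  set σ := Equiv.swap j k with hσ
  set A : Matrix (Fin n) (Fin n) ℝ := (1/2 : ℝ) • (1 : Matrix (Fin n) (Fin n) ℝ) +
      (1 - 1/2 : ℝ) • Matrix.of (fun i i' => if σ i = i' then (1 : ℝ) else 0) - 1 with hAdef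
  have hA : ∀ i i', A i i'
      = (1/2) * ((if σ i = i' then (1:ℝ) else 0) - (if i = i' then (1:ℝ) else 0)) := by
    intro i i'
    simp only [hAdef, Matrix.sub_apply, Matrix.add_apply, Matrix.smul_apply, Matrix.one_apply,
      Matrix.of_apply, smul_eq_mul]
    split_ifs <;> norm_num
  have hinner : ∀ i, ∑ i', |A i i'| ^ 2 = if σ i = i then 0 else 1/2 := by
    intro i
    by_cases h : σ i = i
    · rw [if_pos h]
      apply Finset.sum_eq_zero
      intro i' _
      rw [hA, h]
      simp
    · rw [if_neg h]
      have hptw : ∀ i', |A i i'| ^ 2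
          = (if i' = σ i then (1/4 : ℝ) else 0) + (if i' = i then (1/4 : ℝ) else 0) := by
        intro i'
        rw [hA]
        by_cases h1 : σ i = i' <;> by_cases h2 : i = i'
        · exact absurd (h1.trans h2.symm) h
        · rw [if_pos h1, if_neg h2, if_pos h1.symm, if_neg (Ne.symm h2)]; norm_num
        · rw [if_neg h1, if_pos h2, if_neg (fun hh => h1 hh.symm), if_pos h2.symm]
          norm_num
        · rw [if_neg h1, if_neg h2, if_neg (fun hh => h1 hh.symm), if_neg (Ne.symm h2)]
          norm_num
      rw [Finset.sum_congr rfl (fun i' _ => hptw i'), Finset.sum_add_distrib,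
        Finset.sum_ite_eq', Finset.sum_ite_eq']
      simp only [Finset.mem_univ, if_true]
      norm_num
  unfold frobNorm
  rw [Finset.sum_congr rfl (fun i _ => hinner i)]
  have hfix : ∀ i : Fin n, (if σ i = i then (0:ℝ) else 1/2)
      = (if i = j then (1/2:ℝ) else 0) + (if i = k then (1/2:ℝ) else 0) := by
    intro i
    by_cases hij : i = j
    · subst hij
      rw [if_neg (by rw [hσ, Equiv.swap_apply_left]; exact hjk.symm), if_pos rfl, if_neg hjk]
      ring
    · by_cases hik : i = k
      · subst hik
        rw [if_neg (by rw [hσ, Equiv.swap_apply_right]; exact hjk), if_neg hij, if_pos rfl]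
        ring
      · rw [if_pos (by rw [hσ]; exact Equiv.swap_apply_of_ne_of_ne hij hik), if_neg hij,
          if_neg hik]
        ring
  rw [Finset.sum_congr rfl (fun i _ => hfix i), Finset.sum_add_distrib,
    Finset.sum_ite_eq', Finset.sum_ite_eq']
  simp only [Finset.mem_univ, if_true]
  norm_num

/-- If `λ ∈ 𝕊ⁿ`, `λ ≠ u_n`, and `T` is a T-transform with `λT = u_n`, then
`‖T − I_n‖_F = 1`. -/
theorem tTransform_to_equality_frobNorm_eq_one {n : ℕ} (l : Fin n → ℝ)
    (hl : l ∈ stdSimplex ℝ (Fin n)) (hne : l ≠ fun _ => (n : ℝ)⁻¹)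
    (T : Matrix (Fin n) (Fin n) ℝ) (hT : IsTTransform T)
    (hTu : l ᵥ* T = fun _ => (n : ℝ)⁻¹) :
    frobNorm (T - 1) = 1 := by
  obtain ⟨a, j, k, ha0, ha1, hjk, rfl⟩ := hT
  have hσsymm : (Equiv.swap j k).symm = Equiv.swap j k := Equiv.symm_swap j k
  have key : ∀ i, a * l i + (1 - a) * l (Equiv.swap j k i) = (n : ℝ)⁻¹ := by
    intro i
    have h := congrFun hTu i
    simp only [vecMul, dotProduct, Matrix.add_apply, Matrix.smul_apply, Matrix.one_apply,
      Matrix.of_apply, smul_eq_mul, Equiv.apply_eq_iff_eq_symm_apply, hσsymm,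
      mul_add, mul_ite, mul_one, mul_zero, Finset.sum_add_distrib,
      Finset.sum_ite_eq, Finset.sum_ite_eq', Finset.mem_univ, if_true] at h
    rw [← h]; ring
  have hj := key j
  have hk := key k
  rw [Equiv.swap_apply_left j k] at hj
  rw [Equiv.swap_apply_right j k] at hk
  have ha : a = 1/2 := by
    by_cases hlk : l j = l k
    · exfalso
      apply hne
      funext i
      by_cases hij : i = j
      · subst hij; linear_combination hj + (1 - a) * hlk
      · by_cases hik : i = k
        · subst hik; linear_combination hk - (1 - a) * hlk
        · have h := key i
          rw [Equiv.swap_apply_of_ne_of_ne hij hik] at h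
          linear_combination h
    · have h0 : (2 * a - 1) * (l j - l k) = 0 := by linear_combination hj - hk
      rcases mul_eq_zero.mp h0 with h | h
      · linarith
      · exfalso; exact hlk (by linarith)
  subst ha
  exact frob_aux j k hjk
end
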